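/- For every prime p and every m ≥ 2, the polynomial f(x) = x^m + p is irreducible with values at integers relatively prime (PPI), attains the value p only at x = 0, and no translate f(x - b) with b ∈ ℤ belongs to 𝓕_p; in particular, for b ≥ 1 the translate g(x) = f(x - b) satisfies b < mb(g), so the prime value p of g at x = b occurs below its minimum base. -/

import Mathlib

def IsDigit (a : ℕ) (q : Polynomial ℤ) : Prop :=
  (∃ j : ℕ, j < a ∧ q = Polynomial.C (j : ℤ)) ∨
  (∃ j : ℕ, 1 ≤ j ∧ j ≤ a ∧ q = Polynomial.X - Polynomial.C (j : ℤ))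

def IsBaseXRep (a : ℕ) (f : Polynomial ℤ) (m : ℕ) (d : ℕ → Polynomial ℤ) : Prop :=
  (∀ i, IsDigit a (d i)) ∧ d m ≠ 0 ∧ (∀ i, m < i → d i = 0) ∧
  f = ∑ i ∈ Finset.range (m + 1), d i * Polynomial.X ^ i

noncomputable def mb (f : Polynomial ℤ) : ℕ :=
  sInf {a : ℕ | 0 < a ∧ ∃ m d, IsBaseXRep a f m d}

/-- Positive, proper, irreducible polynomial: positive leading coefficient, no
prime divides all integer values, and irreducible in ℤ[x]. -/
def PPI (f : Polynomial ℤ) : Prop :=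
  0 < f.leadingCoeff ∧ (∀ q : ℤ, Prime q → ∃ n : ℤ, ¬ q ∣ f.eval n) ∧ Irreducible f

/-- The family 𝓕_p of irreducible polynomials associated with the prime p:
the constant p, the p-th cyclotomic polynomial, and every PPI polynomial taking
the value p at some integer b ≥ its minimum base. -/
def Fam (p : ℕ) : Set (Polynomial ℤ) :=
  {f | f = Polynomial.C (p : ℤ) ∨ f = Polynomial.cyclotomic p ℤ ∨
    (PPI f ∧ ∃ b : ℤ, (mb f : ℤ) ≤ b ∧ f.eval b = (p : ℤ))}

/-! Eisenstein at `p` makes `f = X ^ m + p` irreducible, and `f 0 = p`, `f 1 = p + 1` are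
coprime, so no prime divides every value of `f`.

For the translate `g = (X - b) ^ m + p` the coefficient of `X ^ (m - 1)` is `-m b`. A digit
(a constant in `[0, a)` or `X - j` with `1 ≤ j ≤ a`) placed at `X ^ i` contributes at least `-a`
to the coefficient of `X ^ i` and nothing negative elsewhere, so every base-`X` representation of
`g` with digits bounded by `a` has `a ≥ m b`; hence `mb g ≥ m b > b` when `b ≥ 1`. Such
representations exist whenever the leading coefficient is positive (a carry algorithm with carries
in `{0, 1}`), so `mb g` is a genuine minimum and not the junk value `sInf ∅ = 0`.

Since `g` takes the value `p` only at `b`, membership of `g` in `𝓕_p` through the third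
clause would force `mb g ≤ b`, and `mb g > 0` forces `b ≥ 1`. The constant `p` has the wrong
degree, and `Φ_p` would need `-m b = 1`, its coefficient in degree `p - 2 = m - 1`. -/

open Polynomial Finset

theorem irreducible_X_pow_add_C_of_prime {R : Type*} [CommRing R] [IsDomain R] {π : R}
    (hπ : Prime π) {n : ℕ} (hn : n ≠ 0) : Irreducible (X ^ n + C π) := by
  have hmonic : (X ^ n + C π).Monic := monic_X_pow_add_C π hn
  have hP : (Ideal.span {π}).IsPrime := (Ideal.span_singleton_prime hπ.ne_zero).mpr hπ
  refine (hmonic.isEisensteinAt_of_mem_of_notMem hP.ne_top ?_ ?_).irreducible hP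
    hmonic.isPrimitive (by rw [natDegree_X_pow_add_C]; omega)
  · intro k hk
    rw [natDegree_X_pow_add_C] at hk
    rw [coeff_add, coeff_X_pow, coeff_C, if_neg hk.ne, zero_add]
    split_ifs
    · exact Ideal.mem_span_singleton_self π
    · exact Ideal.zero_mem _
  · rw [coeff_add, coeff_X_pow, coeff_C, if_neg (Ne.symm hn), if_pos rfl, zero_add,
      Ideal.span_singleton_pow, Ideal.mem_span_singleton]
    exact fun h => hπ.not_isUnit (hπ.squarefree π (by rwa [← sq]))

theorem exists_not_dvd_eval_of_isCoprime {R : Type*} [CommRing R] {f : R[X]} {x y : R}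
    (h : IsCoprime (f.eval x) (f.eval y)) {q : R} (hq : ¬IsUnit q) : ∃ n, ¬q ∣ f.eval n := by
  by_contra! hdvd
  exact hq (h.isUnit_of_dvd' (hdvd x) (hdvd y))

section Translate

variable {R : Type*} [CommRing R] (m : ℕ) (c b : R)

theorem X_pow_add_C_comp_X_sub_C : (X ^ m + C c).comp (X - C b) = (X - C b) ^ m + C c := by
  simp

theorem eval_X_pow_add_C_comp_X_sub_C (x : R) :
    ((X ^ m + C c).comp (X - C b)).eval x = (x - b) ^ m + c := by
  simp

variable {m}

theorem coeff_X_pow_add_C_comp_X_sub_C_pred (hm : 2 ≤ m) :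
    ((X ^ m + C c).comp (X - C b)).coeff (m - 1) = -(m * b) := by
  rw [X_pow_add_C_comp_X_sub_C, coeff_add, coeff_C, if_neg (by omega), add_zero, sub_eq_add_neg,
    ← map_neg, coeff_X_add_C_pow, Nat.choose_symm (by omega : 1 ≤ m), Nat.choose_one_right,
    show m - (m - 1) = 1 by omega, pow_one]
  ring

variable [Nontrivial R]

theorem monic_X_pow_add_C_comp_X_sub_C (hm : m ≠ 0) : ((X ^ m + C c).comp (X - C b)).Monic :=
  (monic_X_pow_add_C c hm).comp (monic_X_sub_C b) (by rw [natDegree_X_sub_C]; omega)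

theorem natDegree_X_pow_add_C_comp_X_sub_C (hm : m ≠ 0) :
    ((X ^ m + C c).comp (X - C b)).natDegree = m := by
  rw [natDegree_comp_eq_of_mul_ne_zero, natDegree_X_sub_C, mul_one, natDegree_X_pow_add_C]
  simp [(monic_X_pow_add_C c hm).ne_zero]

end Translate

theorem X_pow_add_C_comp_X_sub_C_ne_cyclotomic {p : ℕ} [Fact p.Prime] {m : ℕ} (hm : 2 ≤ m)
    (c b : ℤ) : (X ^ m + C c).comp (X - C b) ≠ cyclotomic p ℤ := by
  intro h
  have hdeg := congrArg natDegree h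
  rw [natDegree_X_pow_add_C_comp_X_sub_C c b (by omega), natDegree_cyclotomic,
    Nat.totient_prime Fact.out] at hdeg
  have hcoeff := congrArg (coeff · (m - 1)) h
  simp only [coeff_X_pow_add_C_comp_X_sub_C_pred c b hm, cyclotomic_prime, finsetSum_coeff,
    coeff_X_pow, sum_ite_eq, mem_range] at hcoeff
  rw [if_pos (by omega)] at hcoeff
  have hdvd : (m : ℤ) ∣ 1 := ⟨-b, by linarith⟩
  have := Int.le_of_dvd one_pos hdvd
  omega

namespace IsDigit

variable {a : ℕ} {q : ℤ[X]}

theorem zero (ha : 0 < a) : IsDigit a 0 :=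
  Or.inl ⟨0, ha, by simp⟩

theorem C_of_nonneg_of_lt {t : ℤ} (h0 : 0 ≤ t) (ha : t < a) : IsDigit a (C t) :=
  Or.inl ⟨t.toNat, by omega, by rw [Int.toNat_of_nonneg h0]⟩

theorem X_sub_C_of_pos_of_le {j : ℤ} (h0 : 0 < j) (ha : j ≤ a) : IsDigit a (X - C j) :=
  Or.inr ⟨j.toNat, by omega, by omega, by rw [Int.toNat_of_nonneg h0.le]⟩

theorem ite_le_coeff_mul_X_pow (h : IsDigit a q) (i k : ℕ) :
    (if i = k then -(a : ℤ) else 0) ≤ (q * X ^ i).coeff k := by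
  rcases h with ⟨j, -, rfl⟩ | ⟨j, -, hja, rfl⟩
  · rw [coeff_C_mul_X_pow]
    split_ifs <;> omega
  · rw [sub_mul, ← pow_succ', coeff_sub, coeff_X_pow, coeff_C_mul_X_pow]
    split_ifs <;> omega

end IsDigit

def HasDigitExpansion (a : ℕ) (f : ℤ[X]) : Prop :=
  ∃ (N : ℕ) (d : ℕ → ℤ[X]), (∀ i, IsDigit a (d i)) ∧
    f = ∑ i ∈ range N, d i * X ^ i

theorem IsDigit.hasDigitExpansion {a : ℕ} {q : ℤ[X]} (hq : IsDigit a q) :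
    HasDigitExpansion a q :=
  ⟨1, fun _ => q, fun _ => hq, by simp⟩

theorem IsBaseXRep.hasDigitExpansion {a m : ℕ} {f : ℤ[X]} {d : ℕ → ℤ[X]}
    (h : IsBaseXRep a f m d) : HasDigitExpansion a f :=
  ⟨m + 1, d, h.1, h.2.2.2⟩

namespace HasDigitExpansion

variable {a : ℕ} {f : ℤ[X]}

theorem mul_X_add (hf : HasDigitExpansion a f) {q : ℤ[X]} (hq : IsDigit a q) :
    HasDigitExpansion a (f * X + q) := by
  obtain ⟨N, d, hd, rfl⟩ := hf
  refine ⟨N + 1, fun | 0 => q | i + 1 => d i, fun | 0 => hq | i + 1 => hd i, ?_⟩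
  rw [sum_range_succ', sum_mul]
  simp [pow_succ, mul_assoc]

theorem neg_le_coeff (hf : HasDigitExpansion a f) (k : ℕ) : -(a : ℤ) ≤ f.coeff k := by
  obtain ⟨N, d, hd, rfl⟩ := hf
  rw [finsetSum_coeff]
  calc -(a : ℤ) ≤ ∑ i ∈ range N, if i = k then -(a : ℤ) else 0 := by
        rw [sum_ite_eq']
        split_ifs <;> omega
    _ ≤ _ := sum_le_sum fun i _ => (hd i).ite_le_coeff_mul_X_pow i k

theorem exists_isBaseXRep (hf : HasDigitExpansion a f) (hf0 : f ≠ 0) (ha : 0 < a) :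
    ∃ m d, IsBaseXRep a f m d := by
  obtain ⟨N, d, hd, rfl⟩ := hf
  set S := (range N).filter (fun i => d i ≠ 0)
  have hS : S.Nonempty := by
    by_contra hS
    refine hf0 (sum_eq_zero fun i hi => ?_)
    have : d i = 0 := by
      by_contra hdi
      exact hS ⟨i, mem_filter.mpr ⟨hi, hdi⟩⟩
    rw [this, zero_mul]
  set M := S.max' hS
  obtain ⟨hMN, hMd⟩ : M < N ∧ d M ≠ 0 := by
    simpa only [S, mem_filter, mem_range] using S.max'_mem hS
  refine ⟨M, fun i => if i ≤ M then d i else 0, fun i => ?_, by simpa using hMd,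
    fun i hi => if_neg (by omega), ?_⟩
  · dsimp only
    split_ifs
    exacts [hd i, IsDigit.zero ha]
  · refine (sum_subset (by simpa using hMN) fun i hiN hiM => ?_).symm.trans
      (sum_congr rfl fun i hi => ?_)
    · have : i ∉ S := fun hiS => hiM (mem_range.mpr (Nat.lt_succ_of_le (S.le_max' i hiS)))
      simp_all [S]
    · simp only [if_pos (Nat.lt_succ_iff.mp (mem_range.mp hi))]

end HasDigitExpansion

theorem hasDigitExpansion_sub_C {a : ℕ} {f : ℤ[X]} (hf : 0 < f.leadingCoeff)
    (ha : ∀ k, |f.coeff k| < a) {ε : ℤ} (hε₀ : 0 ≤ ε) (hε₁ : ε ≤ 1) :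
    HasDigitExpansion a (f - C ε) := by
  induction hn : f.natDegree generalizing f ε with
  | zero =>
    have hc : f.coeff 0 = f.leadingCoeff := by rw [leadingCoeff, hn]
    have := abs_lt.mp (ha 0)
    rw [eq_C_of_natDegree_eq_zero hn, ← C_sub]
    exact (IsDigit.C_of_nonneg_of_lt (by omega) (by omega)).hasDigitExpansion
  | succ n ih =>
    have hdeg : f.divX.natDegree = n := by
      rw [natDegree_divX_eq_natDegree_tsub_one, hn, Nat.add_sub_cancel]
    have hlc : f.divX.leadingCoeff = f.leadingCoeff := by
      rw [leadingCoeff, hdeg, coeff_divX, leadingCoeff, hn]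
    have hcoeff : ∀ k, |f.divX.coeff k| < a := fun k => by rw [coeff_divX]; exact ha _
    have hsplit := divX_mul_X_add f
    have := abs_lt.mp (ha 0)
    by_cases hc : ε ≤ f.coeff 0
    · have hrest := ih (hlc ▸ hf) hcoeff le_rfl zero_le_one hdeg
      rw [C_0, sub_zero] at hrest
      convert hrest.mul_X_add (IsDigit.C_of_nonneg_of_lt (t := f.coeff 0 - ε) (by omega)
        (by omega)) using 1
      rw [C_sub]
      linear_combination -hsplit
    · have hrest := ih (hlc ▸ hf) hcoeff zero_le_one le_rfl hdeg
      convert hrest.mul_X_add (IsDigit.X_sub_C_of_pos_of_le (j := ε - f.coeff 0) (by omega)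
        (by omega)) using 1
      rw [C_sub, C_1]
      linear_combination -hsplit

theorem exists_isBaseXRep {f : ℤ[X]} (hf : 0 < f.leadingCoeff) :
    ∃ a, 0 < a ∧ ∃ m d, IsBaseXRep a f m d := by
  set a := f.support.sup (fun k => (f.coeff k).natAbs) + 1
  have ha : ∀ k, |f.coeff k| < a := fun k => by
    have : (f.coeff k).natAbs ≤ f.support.sup (fun k => (f.coeff k).natAbs) := by
      by_cases hk : k ∈ f.support
      · exact le_sup (f := fun k => (f.coeff k).natAbs) hk
      · simp [notMem_support_iff.mp hk]
    rw [Int.abs_eq_natAbs]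
    omega
  have hexp := hasDigitExpansion_sub_C hf ha le_rfl zero_le_one
  rw [C_0, sub_zero] at hexp
  exact ⟨a, by omega, hexp.exists_isBaseXRep (leadingCoeff_ne_zero.mp hf.ne') (by omega)⟩

theorem mb_pos_and_isBaseXRep {f : ℤ[X]} (hf : 0 < f.leadingCoeff) :
    0 < mb f ∧ ∃ m d, IsBaseXRep (mb f) f m d :=
  Nat.sInf_mem (exists_isBaseXRep hf)

theorem neg_coeff_le_mb {f : ℤ[X]} (hf : 0 < f.leadingCoeff) (k : ℕ) : -f.coeff k ≤ mb f := by
  obtain ⟨-, m, d, h⟩ := mb_pos_and_isBaseXRep hf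
  linarith [h.hasDigitExpansion.neg_le_coeff k]

/-- For every prime p and m ≥ 2, f = x^m + p is PPI, attains the value p only at
x = 0, no translate f(x - b) lies in 𝓕_p, and for b ≥ 1 the translate attains p
at x = b strictly below its minimum base. -/
theorem translate_not_in_Fam (p : ℕ) (hp : p.Prime) (m : ℕ) (hm : 2 ≤ m) :
    PPI (Polynomial.X ^ m + Polynomial.C (p : ℤ)) ∧
    (∀ x : ℤ, (Polynomial.X ^ m + Polynomial.C (p : ℤ)).eval x = (p : ℤ) ↔ x = 0) ∧
    (∀ b : ℤ,
      (Polynomial.X ^ m + Polynomial.C (p : ℤ)).comp (Polynomial.X - Polynomial.C b) ∉ Fam p) ∧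
    (∀ b : ℤ, 1 ≤ b →
      b < (mb ((Polynomial.X ^ m + Polynomial.C (p : ℤ)).comp (Polynomial.X - Polynomial.C b)) : ℤ)) := by
  have hm0 : m ≠ 0 := by omega
  have hlc (b : ℤ) : 0 < ((X ^ m + C (p : ℤ)).comp (X - C b)).leadingCoeff := by
    rw [(monic_X_pow_add_C_comp_X_sub_C _ b hm0).leadingCoeff]
    exact one_pos
  have eval_eq_iff (b x : ℤ) :
      ((X ^ m + C (p : ℤ)).comp (X - C b)).eval x = (p : ℤ) ↔ x = b := by
    rw [eval_X_pow_add_C_comp_X_sub_C, add_eq_right, pow_eq_zero_iff hm0, sub_eq_zero]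
  have lt_mb (b : ℤ) (hb : 1 ≤ b) : b < mb ((X ^ m + C (p : ℤ)).comp (X - C b)) := by
    have := neg_coeff_le_mb (hlc b) (m - 1)
    rw [coeff_X_pow_add_C_comp_X_sub_C_pred _ b hm, neg_neg] at this
    nlinarith
  refine ⟨⟨?_, fun q hq => ?_, ?_⟩, fun x => by simpa using eval_eq_iff 0 x, ?_, lt_mb⟩
  · simpa using hlc 0
  · refine exists_not_dvd_eval_of_isCoprime (x := 0) (y := 1) ⟨-1, 1, ?_⟩ hq.not_isUnit
    simp [zero_pow hm0]
  · exact irreducible_X_pow_add_C_of_prime (Nat.prime_iff_prime_int.mp hp) hm0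
  · rintro b (h | h | ⟨-, b', hb', hpb'⟩)
    · have := congrArg natDegree h
      rw [natDegree_X_pow_add_C_comp_X_sub_C _ b hm0, natDegree_C] at this
      omega
    · have := Fact.mk hp
      exact X_pow_add_C_comp_X_sub_C_ne_cyclotomic hm _ b h
    · obtain rfl := (eval_eq_iff b b').mp hpb'
      have := (mb_pos_and_isBaseXRep (hlc b')).1
      have := lt_mb b' (by omega)
      omega
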